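/- Let L, L′ ∈ X^c_{n,d}. For all i, j ∈ ℤ the quotient (L_{i−1} + L_i ∩ L′_j)/(L_{i−1} + L_i ∩ L′_{j−1}) is a finite-dimensional k-vector space, and setting a_{ij} = dim_k (L_{i−1} + L_i ∩ L′_j)/(L_{i−1} + L_i ∩ L′_{j−1}), one has a_{−i,−j} = a_{ij} for all i, j ∈ ℤ. -/

import Mathlib

open scoped Classical

noncomputable section

namespace AffLat

variable (k : Type*) [Field k]

/-- The uniformizer `ε ∈ F = k((ε))`. -/
def eps : LaurentSeries k := algebraMap (PowerSeries k) (LaurentSeries k) PowerSeries.X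

/-- The subring `𝔬 = k[[ε]]` of `F = k((ε))`. -/
def oring : Subring (LaurentSeries k) :=
  (algebraMap (PowerSeries k) (LaurentSeries k)).range

variable {k}
variable {V : Type*} [AddCommGroup V] [Module (LaurentSeries k) V]
  [Module (PowerSeries k) V] [IsScalarTower (PowerSeries k) (LaurentSeries k) V]

/-- A lattice in `V`: a finitely generated `𝔬`-submodule `L` with `F·L = V`. -/
def IsLat (L : Submodule (PowerSeries k) V) : Prop :=
  L.FG ∧ Submodule.span (LaurentSeries k) (L : Set V) = ⊤

/-- The dual `L^# = {v ∈ V | ∀ x ∈ L, (v, x) ∈ 𝔬}` of an `𝔬`-submodule `L` with respect to a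
bilinear form `Φ`. -/
def sharp (Φ : V →ₗ[LaurentSeries k] V →ₗ[LaurentSeries k] LaurentSeries k)
    (L : Submodule (PowerSeries k) V) : Submodule (PowerSeries k) V where
  carrier := {v | ∀ x ∈ L, Φ v x ∈ oring k}
  zero_mem' := fun x _ => by rw [map_zero, LinearMap.zero_apply]; exact zero_mem _
  add_mem' := fun {a b} ha hb x hx => by
    rw [map_add, LinearMap.add_apply]; exact add_mem (ha x hx) (hb x hx)
  smul_mem' := fun c v hv x hx => by
    rw [← algebraMap_smul (LaurentSeries k) c v, map_smul, LinearMap.smul_apply, smul_eq_mul]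
    exact mul_mem ⟨c, rfl⟩ (hv x hx)

/-- The `𝔬`-submodule `a • L` for a scalar `a ∈ F`. -/
def esmul (a : LaurentSeries k) (L : Submodule (PowerSeries k) V) :
    Submodule (PowerSeries k) V where
  carrier := (fun v => a • v) '' (L : Set V)
  zero_mem' := ⟨0, L.zero_mem, smul_zero a⟩
  add_mem' := by
    rintro x y ⟨x', hx', rfl⟩ ⟨y', hy', rfl⟩
    exact ⟨x' + y', L.add_mem hx' hy', smul_add a x' y'⟩
  smul_mem' := by
    rintro c x ⟨x', hx', rfl⟩
    refine ⟨c • x', L.smul_mem c hx', ?_⟩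
    show a • (c • x') = c • (a • x')
    rw [← algebraMap_smul (LaurentSeries k) c x', ← algebraMap_smul (LaurentSeries k) c (a • x'),
      smul_smul, smul_smul, mul_comm]

/-- The quotient `p / s` of an `𝔬`-submodule `p` by the `𝔬`-submodule `s ∩ p`. -/
abbrev relQ (p s : Submodule (PowerSeries k) V) : Type _ :=
  ↥p ⧸ (s.comap p.subtype)

/-- The dimension over `k` of an `𝔬`-module (with the `k`-action coming from
`k → 𝔬 = k[[ε]]`). -/
def kdim (k : Type*) [Field k] (Q : Type*) [AddCommGroup Q] [Module (PowerSeries k) Q] : ℕ :=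
  @Module.finrank k Q _ _ (Module.compHom Q (PowerSeries.C : k →+* PowerSeries k))

/-- Finite-dimensionality over `k` of an `𝔬`-module (with the `k`-action coming from
`k → 𝔬 = k[[ε]]`). -/
def kfinite (k : Type*) [Field k] (Q : Type*) [AddCommGroup Q] [Module (PowerSeries k) Q] :
    Prop :=
  @FiniteDimensional k Q _ _ (Module.compHom Q (PowerSeries.C : k →+* PowerSeries k))

end AffLat

namespace AffLat

variable {k : Type*} [Field k]
variable {V : Type*} [AddCommGroup V] [Module (LaurentSeries k) V]
  [Module (PowerSeries k) V] [IsScalarTower (PowerSeries k) (LaurentSeries k) V]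

/-- The set `X^c_{n,d}`: `n`-periodic self-dual chains of lattices, i.e. `L i ⊆ L (i+1)`,
`L i = ε L (i+n)` and `(L i)^# = L (-i-1)` for all `i ∈ ℤ`. -/
def IsXc (Φ : V →ₗ[LaurentSeries k] V →ₗ[LaurentSeries k] LaurentSeries k)
    (n : ℕ) (L : ℤ → Submodule (PowerSeries k) V) : Prop :=
  (∀ i : ℤ, IsLat (L i)) ∧
  (∀ i : ℤ, L i ≤ L (i + 1)) ∧
  (∀ i : ℤ, ∀ v : V, v ∈ L i ↔ ∃ w ∈ L (i + n), v = eps k • w) ∧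
  (∀ i : ℤ, sharp Φ (L i) = L (-i - 1))

end AffLat

/-! Multiplication by `ε` maps `P_{ij} = L_{i-1} + L_i ∩ L'_j` into `P_{i,j-1}`, so
`P_{ij} / P_{i,j-1}` is a finitely generated `𝔬`-module killed by `ε`, i.e. a finite-dimensional
`k`-space. For the symmetry, pair `P_{ij}` with `P_{-i,-j}` by the residue `Res Φ(x, y)`.
Self-duality of the chains makes `Φ` integral on `P_{i,j-1} × P_{-i,-j}` and on
`P_{ij} × P_{-i,-j-1}`, so the pairing descends to the quotients. Its left kernel is exactly
`P_{i,j-1}`: if `Res Φ(x, ·)` vanishes on `P_{-i,-j}`, then `Φ(x, ·)` is integral there, because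
`ε Φ(x, y) = Φ(x, ε y)` with `ε y ∈ P_{-i,-j-1}`; so `x` lies in the dual of `L_{-i} ∩ L'_{-j}`,
which is `L_{i-1} + L'_{j-1}` by double duality of lattices, and the modular law gives
`L_i ∩ (L_{i-1} + L'_{j-1}) = P_{i,j-1}`. Hence `a_{ij} ≤ a_{-i,-j}`, and equality follows by
applying this to `(-i, -j)`. -/

theorem Module.Basis.span_range_extendOfIsLattice {R K V κ : Type*} [CommRing R] [Field K]
    [Algebra R K] [IsFractionRing R K] [AddCommGroup V] [Module R V] [Module K V]
    [IsScalarTower R K V] {L : Submodule R V} [L.IsLattice K] (b : Module.Basis κ R L) :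
    Submodule.span R (Set.range (b.extendOfIsLattice K)) = L := by
  have : Set.range (b.extendOfIsLattice K) = L.subtype '' Set.range b := by
    rw [← Set.range_comp]; ext; simp
  rw [this, ← Submodule.map_span, b.span_eq, Submodule.map_top, Submodule.range_subtype]

namespace AffLat

open PowerSeries (X C constantCoeff)

variable {k : Type*} [Field k]

theorem mem_oring_iff {f : LaurentSeries k} : f ∈ oring k ↔ ∀ n < 0, f.coeff n = 0 := by
  constructor
  · rintro ⟨g, rfl⟩ n hn
    rw [LaurentSeries.coe_algebraMap, HahnSeries.ofPowerSeries_apply]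
    exact HahnSeries.embDomain_of_notMem_range (by simpa using hn.not_ge)
  · intro h
    refine ⟨PowerSeries.mk fun n => f.coeff n, ?_⟩
    ext n
    rw [LaurentSeries.coe_algebraMap]
    rcases le_or_gt 0 n with hn | hn
    · lift n to ℕ using hn
      rw [HahnSeries.ofPowerSeries_apply_coeff, PowerSeries.coeff_mk]
    · rw [h n hn, HahnSeries.ofPowerSeries_apply,
        HahnSeries.embDomain_of_notMem_range (by simpa using hn.not_ge)]

theorem coeff_eps_mul (f : LaurentSeries k) (n : ℤ) : (eps k * f).coeff n = f.coeff (n - 1) := by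
  rw [eps, LaurentSeries.coe_algebraMap, HahnSeries.ofPowerSeries_X]
  simpa using HahnSeries.coeff_single_mul_add (r := (1 : k)) (x := f) (a := n - 1) (b := 1)

theorem coeff_algebraMap_C_mul (a : k) (f : LaurentSeries k) (n : ℤ) :
    (algebraMap (PowerSeries k) (LaurentSeries k) (C a) * f).coeff n = a * f.coeff n := by
  rw [LaurentSeries.coe_algebraMap, HahnSeries.ofPowerSeries_C, HahnSeries.C_mul_eq_smul,
    HahnSeries.coeff_smul, smul_eq_mul]

theorem mem_oring_of_eps_mul_mem {f : LaurentSeries k} (h : eps k * f ∈ oring k)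
    (hres : f.coeff (-1) = 0) : f ∈ oring k := by
  rw [mem_oring_iff] at h ⊢
  intro n hn
  rcases eq_or_lt_of_le (Int.add_one_le_iff.mpr hn) with hn' | hn'
  · rwa [show n = -1 by omega]
  · simpa [coeff_eps_mul] using h (n + 1) hn'

section PowerSeriesModules

variable {Q Q' : Type*} [AddCommGroup Q] [Module (PowerSeries k) Q]
  [AddCommGroup Q'] [Module (PowerSeries k) Q']

theorem smul_eq_C_constantCoeff_smul (hX : ∀ q : Q, (X : PowerSeries k) • q = 0)
    (r : PowerSeries k) (q : Q) : r • q = C (constantCoeff r) • q := by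
  conv_lhs => rw [PowerSeries.eq_X_mul_shift_add_const r]
  rw [add_smul, mul_smul, hX, zero_add]

theorem kfinite_of_X_smul_eq_zero [Module.Finite (PowerSeries k) Q]
    (hX : ∀ q : Q, (X : PowerSeries k) • q = 0) : kfinite k Q := by
  let _ : Module k Q := Module.compHom Q (C : k →+* PowerSeries k)
  obtain ⟨S, hS⟩ := Module.Finite.fg_top (R := PowerSeries k) (M := Q)
  refine ⟨⟨S, Submodule.eq_top_iff'.mpr fun q => ?_⟩⟩
  have hq : q ∈ Submodule.span (PowerSeries k) (S : Set Q) := hS ▸ Submodule.mem_top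
  induction hq using Submodule.span_induction with
  | mem x hx => exact Submodule.subset_span hx
  | zero => exact zero_mem _
  | add x y _ _ hx hy => exact add_mem hx hy
  | smul r x _ hx =>
    rw [smul_eq_C_constantCoeff_smul hX]
    exact Submodule.smul_mem _ (constantCoeff r) hx

theorem kdim_le_of_injective_pairing (hQ' : kfinite k Q') (β : Q →+ Q' →+ k)
    (hβ : Function.Injective β) (hβC : ∀ (a : k) q q', β q (C a • q') = a * β q q')
    (hCβ : ∀ (a : k) q q', β (C a • q) q' = a * β q q') :
    kdim k Q ≤ kdim k Q' := by
  let _ : Module k Q := Module.compHom Q (C : k →+* PowerSeries k)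
  let _ : Module k Q' := Module.compHom Q' (C : k →+* PowerSeries k)
  have : FiniteDimensional k Q' := hQ'
  let f : Q →ₗ[k] Module.Dual k Q' :=
    { toFun := fun q =>
        { toFun := β q, map_add' := map_add _, map_smul' := fun a q' => hβC a q q' }
      map_add' := fun q₁ q₂ => LinearMap.ext fun q' => by simp
      map_smul' := fun a q => LinearMap.ext fun q' => hCβ a q q' }
  have hf : Function.Injective f := fun q₁ q₂ h =>
    hβ (AddMonoidHom.ext fun q' => LinearMap.congr_fun h q')
  exact (LinearMap.finrank_le_finrank_of_injective hf).trans_eq Subspace.dual_finrank_eq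

variable {V : Type*} [AddCommGroup V] [Module (PowerSeries k) V]

theorem kfinite_relQ {P S : Submodule (PowerSeries k) V} (hP : P.FG)
    (hPS : ∀ x ∈ P, (X : PowerSeries k) • x ∈ S) : kfinite k (relQ P S) := by
  have : Module.Finite (PowerSeries k) P := Module.Finite.iff_fg.mpr hP
  refine kfinite_of_X_smul_eq_zero fun q => ?_
  obtain ⟨x, rfl⟩ := Submodule.Quotient.mk_surjective _ q
  rw [← Submodule.Quotient.mk_smul, Submodule.Quotient.mk_eq_zero]
  exact hPS x x.2

theorem kdim_relQ_le_of_pairing {P S P' S' : Submodule (PowerSeries k) V} (β : V →+ V →+ k)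
    (hβC : ∀ (a : k) x y, β x (C a • y) = a * β x y)
    (hCβ : ∀ (a : k) x y, β (C a • x) y = a * β x y)
    (hSP' : ∀ x ∈ S, ∀ y ∈ P', β x y = 0) (hPS' : ∀ x ∈ P, ∀ y ∈ S', β x y = 0)
    (hker : ∀ x ∈ P, (∀ y ∈ P', β x y = 0) → x ∈ S) (hfin : kfinite k (relQ P' S')) :
    kdim k (relQ P S) ≤ kdim k (relQ P' S') := by
  let βP : P →+ relQ P' S' →+ k :=
    { toFun := fun x => QuotientAddGroup.lift (S'.comap P'.subtype).toAddSubgroup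
        ((β x).comp P'.subtype.toAddMonoidHom) fun y hy => hPS' x x.2 y hy
      map_zero' := QuotientAddGroup.addMonoidHom_ext _ <| AddMonoidHom.ext fun y =>
        show β 0 y = 0 by simp
      map_add' := fun x₁ x₂ => QuotientAddGroup.addMonoidHom_ext _ <| AddMonoidHom.ext fun y =>
        show β (x₁ + x₂ : V) y = β x₁ y + β x₂ y by simp }
  let β' : relQ P S →+ relQ P' S' →+ k :=
    QuotientAddGroup.lift (S.comap P.subtype).toAddSubgroup βP fun x hx =>
      QuotientAddGroup.addMonoidHom_ext _ (by ext y; exact hSP' x hx y y.2)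
  refine kdim_le_of_injective_pairing hfin β' ((injective_iff_map_eq_zero β').mpr fun q hq => ?_)
    (fun a q q' => ?_) (fun a q q' => ?_)
  · obtain ⟨x, rfl⟩ := Submodule.Quotient.mk_surjective _ q
    rw [Submodule.Quotient.mk_eq_zero]
    exact hker x x.2 fun y hy => DFunLike.congr_fun hq (Submodule.Quotient.mk (⟨y, hy⟩ : P'))
  · obtain ⟨x, rfl⟩ := Submodule.Quotient.mk_surjective _ q
    obtain ⟨y, rfl⟩ := Submodule.Quotient.mk_surjective _ q'
    exact hβC a x y
  · obtain ⟨x, rfl⟩ := Submodule.Quotient.mk_surjective _ q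
    obtain ⟨y, rfl⟩ := Submodule.Quotient.mk_surjective _ q'
    exact hCβ a x y

end PowerSeriesModules

variable {V : Type*} [AddCommGroup V] [Module (LaurentSeries k) V]

def residuePairing (Φ : V →ₗ[LaurentSeries k] V →ₗ[LaurentSeries k] LaurentSeries k) :
    V →+ V →+ k :=
  AddMonoidHom.mk' (fun x => (HahnSeries.coeff.addMonoidHom (-1)).comp (Φ x).toAddMonoidHom)
    fun x y => by ext; simp

variable {Φ : V →ₗ[LaurentSeries k] V →ₗ[LaurentSeries k] LaurentSeries k}

@[simp]
theorem residuePairing_apply (x y : V) : residuePairing Φ x y = (Φ x y).coeff (-1) := rfl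

theorem residuePairing_eq_zero {x y : V} (h : Φ x y ∈ oring k) : residuePairing Φ x y = 0 :=
  mem_oring_iff.mp h (-1) (by norm_num)

variable [Module (PowerSeries k) V] [IsScalarTower (PowerSeries k) (LaurentSeries k) V]

theorem residuePairing_smul_right (a : k) (x y : V) :
    residuePairing Φ x (C a • y) = a * residuePairing Φ x y := by
  rw [residuePairing_apply, ← algebraMap_smul (LaurentSeries k), map_smul, smul_eq_mul,
    coeff_algebraMap_C_mul, residuePairing_apply]

theorem residuePairing_smul_left (a : k) (x y : V) :
    residuePairing Φ (C a • x) y = a * residuePairing Φ x y := by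
  rw [residuePairing_apply, ← algebraMap_smul (LaurentSeries k), map_smul,
    LinearMap.smul_apply, smul_eq_mul, coeff_algebraMap_C_mul, residuePairing_apply]

section Duality

open LinearMap.BilinForm

theorem sharp_sup (A B : Submodule (PowerSeries k) V) :
    sharp Φ (A ⊔ B) = sharp Φ A ⊓ sharp Φ B := by
  refine le_antisymm (le_inf (fun v hv x hx => hv x (Submodule.mem_sup_left hx))
    (fun v hv x hx => hv x (Submodule.mem_sup_right hx))) ?_
  rintro v ⟨hvA, hvB⟩ x hx
  obtain ⟨a, ha, b, hb, rfl⟩ := Submodule.mem_sup.mp hx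
  rw [map_add]
  exact add_mem (hvA a ha) (hvB b hb)

theorem sharp_eq_dualSubmodule (L : Submodule (PowerSeries k) V) :
    sharp Φ L = dualSubmodule Φ L := by
  ext v
  simp [sharp, mem_dualSubmodule, Submodule.mem_one, oring]

theorem sharp_eq_dualSubmodule_flip (halt : Φ.IsAlt) (L : Submodule (PowerSeries k) V) :
    sharp Φ L = dualSubmodule Φ.flip L := by
  rw [sharp_eq_dualSubmodule]
  ext v
  refine forall₂_congr fun x _ => ?_
  rw [LinearMap.flip_apply, ← halt.neg, neg_mem_iff]

theorem sharp_sharp [FiniteDimensional (LaurentSeries k) V] (halt : Φ.IsAlt)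
    (hnondeg : Φ.SeparatingLeft) (L : Submodule (PowerSeries k) V)
    [L.IsLattice (LaurentSeries k)] : sharp Φ (sharp Φ L) = L := by
  have hΦ : Φ.Nondegenerate := halt.isRefl.nondegenerate_iff_separatingLeft.mpr hnondeg
  rw [sharp_eq_dualSubmodule_flip halt, sharp_eq_dualSubmodule,
    ← (Module.Free.chooseBasis (PowerSeries k) L).span_range_extendOfIsLattice]
  exact dualSubmodule_flip_dualSubmodule_of_basis (R := PowerSeries k) Φ hΦ
    ((Module.Free.chooseBasis (PowerSeries k) L).extendOfIsLattice (LaurentSeries k))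

end Duality

variable {n : ℕ} {L L' : ℤ → Submodule (PowerSeries k) V}

namespace IsXc

theorem isLattice (hX : IsXc Φ n L) (i : ℤ) : (L i).IsLattice (LaurentSeries k) :=
  ⟨(hX.1 i).1, (hX.1 i).2⟩

theorem monotone (hX : IsXc Φ n L) : Monotone L :=
  monotone_int_of_le_succ hX.2.1

theorem sharp_eq (hX : IsXc Φ n L) (i : ℤ) : sharp Φ (L i) = L (-i - 1) :=
  hX.2.2.2 i

theorem X_smul_mem (hX : IsXc Φ n L) (hn : 1 ≤ n) {i j : ℤ} (hij : i ≤ j + 1) {x : V}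
    (hx : x ∈ L i) : (X : PowerSeries k) • x ∈ L j := by
  have h : eps k • x ∈ L (i - n) := (hX.2.2.1 (i - n) _).mpr ⟨x, by simpa using hx, rfl⟩
  rw [eps, algebraMap_smul] at h
  exact hX.monotone (by omega) h

theorem apply_mem_oring (hX : IsXc Φ n L) {i j : ℤ} (hij : i + j ≤ -1) {x y : V}
    (hx : x ∈ L i) (hy : y ∈ L j) : Φ x y ∈ oring k := by
  rw [show i = -(-i - 1) - 1 by ring, ← hX.sharp_eq] at hx
  exact hx y (hX.monotone (by omega) hy)

end IsXc

variable (L L') in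
/-- `a_{ij} = dim_k (stratum L L' i j / stratum L L' i (j - 1))`. -/
def stratum (i j : ℤ) : Submodule (PowerSeries k) V :=
  L (i - 1) ⊔ (L i ⊓ L' j)

theorem X_smul_mem_stratum (hX : IsXc Φ n L) (hX' : IsXc Φ n L') (hn : 1 ≤ n) {i j : ℤ}
    {x : V} (hx : x ∈ stratum L L' i j) : (X : PowerSeries k) • x ∈ stratum L L' i (j - 1) := by
  obtain ⟨a, ha, m, hm, rfl⟩ := Submodule.mem_sup.mp hx
  rw [smul_add]
  exact add_mem (Submodule.mem_sup_left (hX.X_smul_mem hn (by omega) ha))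
    (Submodule.mem_sup_right ⟨hX.X_smul_mem hn (by omega) hm.1,
      hX'.X_smul_mem hn (by omega) hm.2⟩)

theorem kfinite_stratum (hX : IsXc Φ n L) (hX' : IsXc Φ n L') (hn : 1 ≤ n) (i j : ℤ) :
    kfinite k (relQ (stratum L L' i j) (stratum L L' i (j - 1))) :=
  kfinite_relQ ((hX.1 (i - 1)).1.sup ((hX.1 i).1.of_le inf_le_left))
    fun _ => X_smul_mem_stratum hX hX' hn

theorem apply_mem_oring_of_mem_stratum (hX : IsXc Φ n L) (hX' : IsXc Φ n L')
    {i j i' j' : ℤ} (hi : i + i' ≤ 0) (hj : j + j' ≤ -1) {x y : V}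
    (hx : x ∈ stratum L L' i j) (hy : y ∈ stratum L L' i' j') : Φ x y ∈ oring k := by
  obtain ⟨xa, hxa, xm, hxm, rfl⟩ := Submodule.mem_sup.mp hx
  obtain ⟨ya, hya, ym, hym, rfl⟩ := Submodule.mem_sup.mp hy
  simp only [map_add, LinearMap.add_apply]
  refine add_mem (add_mem ?_ ?_) (add_mem ?_ ?_)
  · exact hX.apply_mem_oring (by omega) hxa hya
  · exact hX.apply_mem_oring (by omega) hxm.1 hya
  · exact hX.apply_mem_oring (by omega) hxa hym.1
  · exact hX'.apply_mem_oring hj hxm.2 hym.2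

theorem sharp_inf_eq [FiniteDimensional (LaurentSeries k) V] (halt : Φ.IsAlt)
    (hnondeg : Φ.SeparatingLeft) (hX : IsXc Φ n L) (hX' : IsXc Φ n L') (i j : ℤ) :
    sharp Φ (L (-i) ⊓ L' (-j)) = L (i - 1) ⊔ L' (j - 1) := by
  have := hX.isLattice (i - 1)
  have := hX'.isLattice (j - 1)
  have h : sharp Φ (L (i - 1) ⊔ L' (j - 1)) = L (-i) ⊓ L' (-j) := by
    rw [sharp_sup, hX.sharp_eq, hX'.sharp_eq, show -(i - 1) - 1 = -i by ring,
      show -(j - 1) - 1 = -j by ring]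
  rw [← h, sharp_sharp halt hnondeg]

theorem mem_stratum_of_residuePairing_eq_zero [FiniteDimensional (LaurentSeries k) V]
    (halt : Φ.IsAlt) (hnondeg : Φ.SeparatingLeft) (hX : IsXc Φ n L) (hX' : IsXc Φ n L')
    (hn : 1 ≤ n) {i j : ℤ} {x : V} (hx : x ∈ stratum L L' i j)
    (h : ∀ y ∈ stratum L L' (-i) (-j), residuePairing Φ x y = 0) :
    x ∈ stratum L L' i (j - 1) := by
  have hsharp : x ∈ sharp Φ (L (-i) ⊓ L' (-j)) := fun y hy => by
    have hεy : Φ x ((X : PowerSeries k) • y) ∈ oring k :=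
      apply_mem_oring_of_mem_stratum hX hX' (by omega) (by omega) hx
        (X_smul_mem_stratum hX hX' hn (Submodule.mem_sup_right hy))
    rw [← algebraMap_smul (LaurentSeries k), map_smul, smul_eq_mul] at hεy
    exact mem_oring_of_eps_mul_mem hεy (h y (Submodule.mem_sup_right hy))
  rw [sharp_inf_eq halt hnondeg hX hX'] at hsharp
  have hxi : x ∈ L i := sup_le (hX.monotone (by omega)) inf_le_left hx
  rw [stratum, inf_comm, ← sup_inf_assoc_of_le _ (hX.monotone (by omega))]
  exact ⟨hsharp, hxi⟩

theorem kdim_stratum_le [FiniteDimensional (LaurentSeries k) V] (halt : Φ.IsAlt)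
    (hnondeg : Φ.SeparatingLeft) (hX : IsXc Φ n L) (hX' : IsXc Φ n L') (hn : 1 ≤ n)
    (i j : ℤ) :
    kdim k (relQ (stratum L L' i j) (stratum L L' i (j - 1))) ≤
      kdim k (relQ (stratum L L' (-i) (-j)) (stratum L L' (-i) (-j - 1))) :=
  kdim_relQ_le_of_pairing (residuePairing Φ) residuePairing_smul_right
    residuePairing_smul_left
    (fun _ hx _ hy => residuePairing_eq_zero
      (apply_mem_oring_of_mem_stratum hX hX' (by omega) (by omega) hx hy))
    (fun _ hx _ hy => residuePairing_eq_zero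
      (apply_mem_oring_of_mem_stratum hX hX' (by omega) (by omega) hx hy))
    (fun _ hx => mem_stratum_of_residuePairing_eq_zero halt hnondeg hX hX' hn hx)
    (kfinite_stratum hX hX' hn (-i) (-j))

end AffLat

open AffLat

theorem statement10_general {k : Type*} [Field k]
    {V : Type*} [AddCommGroup V] [Module (LaurentSeries k) V]
    [Module (PowerSeries k) V] [IsScalarTower (PowerSeries k) (LaurentSeries k) V]
    [FiniteDimensional (LaurentSeries k) V]
    (r : ℕ)
    (Φ : V →ₗ[LaurentSeries k] V →ₗ[LaurentSeries k] LaurentSeries k)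
    (halt : ∀ v : V, Φ v v = 0)
    (hnondeg : ∀ v : V, (∀ w : V, Φ v w = 0) → v = 0)
    (L L' : ℤ → Submodule (PowerSeries k) V)
    (hL : IsXc Φ (2 * r + 2) L) (hL' : IsXc Φ (2 * r + 2) L') :
    (∀ i j : ℤ,
      kfinite k (relQ ((L (i - 1)) ⊔ (L i ⊓ L' j)) ((L (i - 1)) ⊔ (L i ⊓ L' (j - 1))))) ∧
    (∀ i j : ℤ,
      kdim k (relQ ((L (-i - 1)) ⊔ (L (-i) ⊓ L' (-j))) ((L (-i - 1)) ⊔ (L (-i) ⊓ L' (-j - 1)))) =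
      kdim k (relQ ((L (i - 1)) ⊔ (L i ⊓ L' j)) ((L (i - 1)) ⊔ (L i ⊓ L' (j - 1))))) := by
  have hn : 1 ≤ 2 * r + 2 := by omega
  refine ⟨kfinite_stratum hL hL' hn, fun i j => le_antisymm ?_
    (kdim_stratum_le halt hnondeg hL hL' hn i j)⟩
  have h := kdim_stratum_le halt hnondeg hL hL' hn (-i) (-j)
  rwa [neg_neg, neg_neg] at h

/-- Let `L, L′ ∈ X^c_{n,d}`.  For all `i, j ∈ ℤ` the quotient
`(L_{i-1} + L_i ∩ L′_j)/(L_{i-1} + L_i ∩ L′_{j-1})` is a finite-dimensional `k`-vector space,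
and with `a_{ij}` its dimension over `k` one has `a_{-i,-j} = a_{ij}` for all `i, j`. -/
theorem statement10 {k : Type*} [Field k] [Fintype k] (hodd : Odd (Fintype.card k))
    {V : Type*} [AddCommGroup V] [Module (LaurentSeries k) V]
    [Module (PowerSeries k) V] [IsScalarTower (PowerSeries k) (LaurentSeries k) V]
    [FiniteDimensional (LaurentSeries k) V]
    (r d : ℕ)
    (hdim : Module.finrank (LaurentSeries k) V = 2 * d)
    (Φ : V →ₗ[LaurentSeries k] V →ₗ[LaurentSeries k] LaurentSeries k)
    (halt : ∀ v : V, Φ v v = 0)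
    (hnondeg : ∀ v : V, (∀ w : V, Φ v w = 0) → v = 0)
    (L L' : ℤ → Submodule (PowerSeries k) V)
    (hL : IsXc Φ (2 * r + 2) L) (hL' : IsXc Φ (2 * r + 2) L') :
    (∀ i j : ℤ,
      kfinite k (relQ ((L (i - 1)) ⊔ (L i ⊓ L' j)) ((L (i - 1)) ⊔ (L i ⊓ L' (j - 1))))) ∧
    (∀ i j : ℤ,
      kdim k (relQ ((L (-i - 1)) ⊔ (L (-i) ⊓ L' (-j))) ((L (-i - 1)) ⊔ (L (-i) ⊓ L' (-j - 1)))) =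
      kdim k (relQ ((L (i - 1)) ⊔ (L i ⊓ L' j)) ((L (i - 1)) ⊔ (L i ⊓ L' (j - 1))))) :=
  statement10_general r Φ halt hnondeg L L' hL hL'
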